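/- arXiv:2103.04695 — 2 statements merged into one kernel-verified Lean document; each statement's English description precedes it below -/
import Mathlib

section
/- Let (X, h) be a zero-dimensional system such that for every partition R of X there exists a system of finite first return time maps subordinate to R. Then (X, h) has no periodic points if and only if for every partition P of X and every N ∈ ℤ_{>0} there exists a system S = (T, (X_t), (K_t), (Y_{t,k}), (J_{t,k})) of finite first return time maps subordinate to P such that J_{t,k} ≥ N for all t ∈ {1, …, T} and all k ∈ {1, …, K_t}. -/
open Set Topology

variable {X : Type*}

/-- The first return time map `λ_U` of a subset `U` under the homeomorphism `h`:
`λ_U x = inf { n ∈ ℤ_{>0} | h^n x ∈ U }`, with value `∞` (i.e. `⊤ : ℕ∞`) when no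
such `n` exists. -/
noncomputable def firstReturnTime [TopologicalSpace X] (h : X ≃ₜ X) (U : Set X) (x : X) : ℕ∞ :=
  sInf ((fun n : ℕ => (n : ℕ∞)) '' {n : ℕ | 0 < n ∧ (⇑h)^[n] x ∈ U})

/-- A partition of `X`: a finite collection of mutually disjoint compact open subsets
whose union is `X`. -/
def IsPartition [TopologicalSpace X] (P : Set (Set X)) : Prop :=
  P.Finite ∧ (∀ U ∈ P, IsCompact U) ∧ (∀ U ∈ P, IsOpen U) ∧
    P.PairwiseDisjoint id ∧ ⋃₀ P = Set.univ

/-- `P'` is finer than `P`: every element of `P'` is contained in an element of `P`. -/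
def Finer (P' P : Set (Set X)) : Prop :=
  ∀ U ∈ P', ∃ V ∈ P, U ⊆ V

/-- The data of a system of finite first return time maps:
`T` bases `base t`, numbers `K t`, pieces `Y t k ⊆ base t` and return times `J t k`. -/
structure ReturnSystem (X : Type*) where
  T : ℕ
  base : Fin T → Set X
  K : Fin T → ℕ
  Y : (t : Fin T) → Fin (K t) → Set X
  J : (t : Fin T) → Fin (K t) → ℕ

/-- `S` is a system of finite first return time maps (for the homeomorphism `h`)
subordinate to `P`. -/
structure IsReturnSystem [TopologicalSpace X] (h : X ≃ₜ X) (P : Set (Set X))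
    (S : ReturnSystem X) : Prop where
  T_pos : 0 < S.T
  base_isCompact : ∀ t, IsCompact (S.base t)
  base_isOpen : ∀ t, IsOpen (S.base t)
  base_subset : ∀ t, ∃ U ∈ P, S.base t ⊆ U
  K_pos : ∀ t, 0 < S.K t
  Y_isCompact : ∀ t k, IsCompact (S.Y t k)
  Y_isOpen : ∀ t k, IsOpen (S.Y t k)
  Y_disjoint : ∀ t, ∀ k k', k ≠ k' → Disjoint (S.Y t k) (S.Y t k')
  Y_iUnion : ∀ t, (⋃ k, S.Y t k) = S.base t
  J_pos : ∀ t k, 0 < S.J t k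
  returnTime : ∀ t k, ∀ x ∈ S.Y t k, firstReturnTime h (S.base t) x = (S.J t k : ℕ∞)
  image_disjoint : ∀ t, ∀ k k', k ≠ k' →
    Disjoint ((⇑h)^[S.J t k] '' S.Y t k) ((⇑h)^[S.J t k'] '' S.Y t k')
  image_iUnion : ∀ t, (⋃ k, (⇑h)^[S.J t k] '' S.Y t k) = S.base t
  tower : ∀ x : X, ∃! p : Σ t : Fin S.T, Fin (S.K t) × ℕ,
    p.2.2 < S.J p.1 p.2.1 ∧ x ∈ (⇑h)^[p.2.2] '' S.Y p.1 p.2.1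

/-- The partition `P₁(S) = { h^j (Y t k) | 0 ≤ j ≤ J t k - 1 }`. -/
def ReturnSystem.partOne [TopologicalSpace X] (h : X ≃ₜ X) (S : ReturnSystem X) :
    Set (Set X) :=
  {V | ∃ (t : Fin S.T) (k : Fin (S.K t)) (j : ℕ), j < S.J t k ∧ V = (⇑h)^[j] '' S.Y t k}

/-- The partition `P₂(S) = { h^j (Y t k) | 1 ≤ j ≤ J t k }`. -/
def ReturnSystem.partTwo [TopologicalSpace X] (h : X ≃ₜ X) (S : ReturnSystem X) :
    Set (Set X) :=
  {V | ∃ (t : Fin S.T) (k : Fin (S.K t)) (j : ℕ),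
    0 < j ∧ j ≤ S.J t k ∧ V = (⇑h)^[j] '' S.Y t k}

/-- `Y` is a minimal set for the system `(X, h)`: nonempty, closed, `h`-invariant, with no
nonempty proper closed `h`-invariant subset. -/
def IsMinimalSet [TopologicalSpace X] (h : X ≃ₜ X) (Y : Set X) : Prop :=
  Y.Nonempty ∧ IsClosed Y ∧ (⇑h) '' Y = Y ∧
    ∀ Y' ⊆ Y, Y'.Nonempty → IsClosed Y' → (⇑h) '' Y' = Y' → Y' = Y

/-- `Y` is a minimal set of the subsystem of `(X, h)` on the (closed, invariant) subset `F`. -/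
def IsMinimalSetWithin [TopologicalSpace X] (h : X ≃ₜ X) (F Y : Set X) : Prop :=
  Y ⊆ F ∧ IsMinimalSet h Y

/-- `(Z, ψ)` witnesses fiberwise essential minimality of `(X, h)`: `Z ⊆ X` is closed,
`ψ : X → Z` is a quotient map restricting to the identity on `Z` with `ψ ∘ h = ψ`, and each
fiber `ψ⁻¹(z)` is an essentially minimal subsystem whose (unique) minimal set contains `z`. -/
structure IsFiberwiseWitness [TopologicalSpace X] (h : X ≃ₜ X) (Z : Set X)
    (ψ : X → Z) : Prop where
  closed : IsClosed Z
  quotient : IsQuotientMap ψ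
  restrict_id : ∀ (x : X) (hx : x ∈ Z), ψ x = ⟨x, hx⟩
  comp_h : ∀ x, ψ (h x) = ψ x
  fiber : ∀ z : Z, ∃ Y : Set X, IsMinimalSetWithin h (ψ ⁻¹' {z}) Y ∧ (z : X) ∈ Y ∧
    ∀ Y', IsMinimalSetWithin h (ψ ⁻¹' {z}) Y' → Y' = Y

/-- `(X, h)` is fiberwise essentially minimal. -/
def IsFiberwiseEssentiallyMinimal [TopologicalSpace X] (h : X ≃ₜ X) : Prop :=
  ∃ (Z : Set X) (ψ : X → Z), IsFiberwiseWitness h Z ψ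

/-!
A point that is not periodic with period below `N` is separated from its first `N - 1` iterates,
so it has an open neighbourhood to which no point returns before time `N`. In a profinite space
these neighbourhoods, taken inside the cells of `P`, refine to a clopen partition `R`, and every
return time of a nonempty piece of a system subordinate to `R` is then at least `N`. Conversely,
if `x` has period `m`, the tower piece through `x` returns to its base within `m` steps, so no
system subordinate to `{X}` has all return times `≥ m + 1`.
-/

open Function Filter

theorem Equiv.Perm.zpow_apply_eq_self_iff_isPeriodicPt {α : Type*} (e : Equiv.Perm α) (n : ℤ)
    (x : α) : (e ^ n) x = x ↔ IsPeriodicPt e n.natAbs x := by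
  rw [← Equiv.Perm.smul_def, MulAction.zpow_smul_eq_iff_minimalPeriod_dvd,
    isPeriodicPt_iff_minimalPeriod_dvd, Int.natCast_dvd]
  rfl

theorem Continuous.exists_mem_nhds_forall_apply_notMem {Y : Type*} [TopologicalSpace Y]
    [T2Space Y] {f : Y → Y} (hf : Continuous f) {x : Y} (hx : f x ≠ x) :
    ∃ W ∈ 𝓝 x, ∀ y ∈ W, f y ∉ W := by
  obtain ⟨u, v, hu, hv, huv⟩ := t2_separation_nhds hx
  refine ⟨v ∩ f ⁻¹' u, inter_mem hv (hf.continuousAt.preimage_mem_nhds hu), ?_⟩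
  rintro y ⟨-, hyu⟩ ⟨hfyv, -⟩
  exact huv.le_bot ⟨hyu, hfyv⟩

theorem exists_isPartition_forall_subset {Y : Type*} [TopologicalSpace Y]
    [TotallyDisconnectedSpace Y] [T2Space Y] [CompactSpace Y] {ι : Type*} {U : ι → Set Y}
    (hU : ∀ i, IsOpen (U i)) (hcover : ⋃ i, U i = univ) :
    ∃ R : Set (Set Y), IsPartition R ∧ ∀ W ∈ R, ∃ i, W ⊆ U i := by
  obtain ⟨n, W, hWU, hWcover, hWdisj⟩ :=
    (TopologicalSpace.IsOpenCover.of_sets hU hcover).exists_finite_nonempty_disjoint_clopen_cover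
  refine ⟨range fun j => (W j : Set Y), ⟨finite_range _, ?_, ?_, ?_, ?_⟩, ?_⟩
  · rintro _ ⟨j, rfl⟩
    exact (W j).isClopen.isClosed.isCompact
  · rintro _ ⟨j, rfl⟩
    exact (W j).isClopen.isOpen
  · refine pairwiseDisjoint_range_iff.2 fun j j' hne => ?_
    exact TopologicalSpace.Clopens.coe_disjoint.2 (hWdisj fun e => hne (e ▸ rfl))
  · rw [sUnion_range]
    exact univ_subset_iff.1 hWcover
  · rintro _ ⟨j, rfl⟩
    exact (hWU j).2

theorem isPartition_singleton_univ {Y : Type*} [TopologicalSpace Y] [CompactSpace Y] :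
    IsPartition ({univ} : Set (Set Y)) := by
  refine ⟨finite_singleton _, ?_, ?_, pairwiseDisjoint_singleton _ _, sUnion_singleton _⟩
  · rintro U rfl; exact isCompact_univ
  · rintro U rfl; exact isOpen_univ

section FirstReturnTime

variable [TopologicalSpace X] (h : X ≃ₜ X) {U V : Set X} {x : X}

theorem firstReturnTime_le {n : ℕ} (hn : 0 < n) (hx : (⇑h)^[n] x ∈ U) :
    firstReturnTime h U x ≤ n :=
  sInf_le ⟨n, ⟨hn, hx⟩, rfl⟩

theorem le_firstReturnTime {N : ℕ} (hx : ∀ j, 0 < j → j < N → (⇑h)^[j] x ∉ U) :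
    (N : ℕ∞) ≤ firstReturnTime h U x := by
  refine le_sInf ?_
  rintro _ ⟨j, ⟨hj, hjU⟩, rfl⟩
  by_contra! hlt
  exact hx j hj (by exact_mod_cast hlt) hjU

theorem firstReturnTime_anti (hUV : U ⊆ V) : firstReturnTime h V x ≤ firstReturnTime h U x :=
  sInf_le_sInf (image_mono fun _ hn => ⟨hn.1, hUV hn.2⟩)

theorem exists_isOpen_le_firstReturnTime [T2Space X] {N : ℕ}
    (hx : ∀ j, 0 < j → j < N → (⇑h)^[j] x ≠ x) (hU : U ∈ 𝓝 x) :
    ∃ V ⊆ U, IsOpen V ∧ x ∈ V ∧ ∀ y ∈ V, (N : ℕ∞) ≤ firstReturnTime h V y := by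
  have hsep : ∀ j ∈ Finset.Ioo 0 N, ∀ᶠ W in (𝓝 x).smallSets, ∀ y ∈ W, (⇑h)^[j] y ∉ W := by
    intro j hj
    obtain ⟨hj0, hjN⟩ := Finset.mem_Ioo.1 hj
    refine (eventually_smallSets' fun W W' hWW' hW' y hy hjy => ?_).2
      ((h.continuous.iterate j).exists_mem_nhds_forall_apply_notMem (hx j hj0 hjN))
    exact hW' y (hWW' hy) (hWW' hjy)
  obtain ⟨V, ⟨hxV, hVo⟩, hV⟩ := (nhds_basis_opens x).smallSets.eventually_iff.1
    (((eventually_all_finset _).2 hsep).and (eventually_smallSets_subset.2 hU))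
  obtain ⟨hVsep, hVU⟩ := hV (mem_powerset Subset.rfl)
  refine ⟨V, hVU, hVo, hxV, fun y hy => le_firstReturnTime h fun j hj hjN => ?_⟩
  exact hVsep j (Finset.mem_Ioo.2 ⟨hj, hjN⟩) y hy

theorem exists_isPartition_finer_forall_le_firstReturnTime [T2Space X] [CompactSpace X]
    [TotallyDisconnectedSpace X] {P : Set (Set X)} (hP : IsPartition P) {N : ℕ}
    (hx : ∀ x, ∀ j, 0 < j → j < N → (⇑h)^[j] x ≠ x) :
    ∃ R : Set (Set X), IsPartition R ∧ Finer R P ∧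
      ∀ W ∈ R, ∀ y ∈ W, (N : ℕ∞) ≤ firstReturnTime h W y := by
  obtain ⟨-, -, hPopen, -, hPcover⟩ := hP
  have hlocal : ∀ x, ∃ V, (∃ U ∈ P, V ⊆ U) ∧ IsOpen V ∧ x ∈ V ∧
      ∀ y ∈ V, (N : ℕ∞) ≤ firstReturnTime h V y := by
    intro x
    obtain ⟨U, hUP, hxU⟩ := mem_sUnion.1 (hPcover.symm ▸ mem_univ x)
    obtain ⟨V, hVU, hV⟩ := exists_isOpen_le_firstReturnTime h (hx x) ((hPopen U hUP).mem_nhds hxU)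
    exact ⟨V, ⟨U, hUP, hVU⟩, hV⟩
  choose V hVP hVo hxV hVN using hlocal
  obtain ⟨R, hR, hRV⟩ := exists_isPartition_forall_subset hVo
    (eq_univ_of_forall fun x => mem_iUnion.2 ⟨x, hxV x⟩)
  refine ⟨R, hR, fun W hW => ?_, fun W hW y hy => ?_⟩ <;> obtain ⟨x, hWV⟩ := hRV W hW
  · obtain ⟨U, hUP, hVU⟩ := hVP x
    exact ⟨U, hUP, hWV.trans hVU⟩
  · exact (hVN x y (hWV hy)).trans (firstReturnTime_anti h hWV)

end FirstReturnTime

namespace ReturnSystem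

open Classical in
/-- `IsReturnSystem` does not constrain the return time of an empty piece. -/
noncomputable def fillEmptyJ (S : ReturnSystem X) (N : ℕ) : ReturnSystem X :=
  { S with J := fun t k => if (S.Y t k).Nonempty then S.J t k else N }

variable {S : ReturnSystem X}

theorem fillEmptyJ_J_of_nonempty {N : ℕ} {t : Fin S.T} {k : Fin (S.K t)}
    (hY : (S.Y t k).Nonempty) : (S.fillEmptyJ N).J t k = S.J t k :=
  if_pos hY

theorem image_iterate_fillEmptyJ (f : X → X) (N : ℕ) (t : Fin S.T) (k : Fin (S.K t)) :
    f^[(S.fillEmptyJ N).J t k] '' (S.fillEmptyJ N).Y t k = f^[S.J t k] '' S.Y t k := by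
  change f^[_] '' S.Y t k = _
  rcases (S.Y t k).eq_empty_or_nonempty with hY | hY
  · simp only [hY, image_empty]
  · rw [fillEmptyJ_J_of_nonempty hY]

end ReturnSystem

namespace IsReturnSystem

variable [TopologicalSpace X] {h : X ≃ₜ X} {P R : Set (Set X)} {S : ReturnSystem X}

theorem mem_base (hS : IsReturnSystem h P S) {t : Fin S.T} {k : Fin (S.K t)} {y : X}
    (hy : y ∈ S.Y t k) : y ∈ S.base t :=
  hS.Y_iUnion t ▸ mem_iUnion.2 ⟨k, hy⟩

theorem mono (hS : IsReturnSystem h R S) (hRP : Finer R P) : IsReturnSystem h P S :=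
  { hS with
    base_subset := fun t => by
      obtain ⟨U, hUR, hbU⟩ := hS.base_subset t
      obtain ⟨V, hVP, hUV⟩ := hRP U hUR
      exact ⟨V, hVP, hbU.trans hUV⟩ }

theorem fillEmptyJ (hS : IsReturnSystem h P S) {N : ℕ} (hN : 0 < N) :
    IsReturnSystem h P (S.fillEmptyJ N) :=
  { hS with
    J_pos := fun t k => by
      dsimp only [ReturnSystem.fillEmptyJ]
      split_ifs
      exacts [hS.J_pos t k, hN]
    returnTime := fun t k x hx => by
      rw [ReturnSystem.fillEmptyJ_J_of_nonempty (S := S) ⟨x, hx⟩]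
      exact hS.returnTime t k x hx
    image_disjoint := fun t k k' hne => by
      rw [S.image_iterate_fillEmptyJ _ _ t k, S.image_iterate_fillEmptyJ _ _ t k']
      exact hS.image_disjoint t k k' hne
    image_iUnion := fun t =>
      (iUnion_congr fun k => S.image_iterate_fillEmptyJ _ N t k).trans (hS.image_iUnion t)
    tower := fun x => by
      refine (existsUnique_congr fun q => and_congr_left fun hx => ?_).1 (hS.tower x)
      rw [ReturnSystem.fillEmptyJ_J_of_nonempty (S := S) (nonempty_of_mem hx).of_image] }

theorem le_J_of_mem (hS : IsReturnSystem h P S) {N : ℕ}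
    (hP : ∀ U ∈ P, ∀ y ∈ U, (N : ℕ∞) ≤ firstReturnTime h U y) {t : Fin S.T} {k : Fin (S.K t)}
    {y : X} (hy : y ∈ S.Y t k) : N ≤ S.J t k := by
  obtain ⟨U, hUP, hbU⟩ := hS.base_subset t
  have := (hP U hUP y (hbU (hS.mem_base hy))).trans (firstReturnTime_anti h hbU)
  rwa [hS.returnTime t k y hy, Nat.cast_le] at this

theorem le_fillEmptyJ (hS : IsReturnSystem h P S) {N : ℕ}
    (hP : ∀ U ∈ P, ∀ y ∈ U, (N : ℕ∞) ≤ firstReturnTime h U y) (t : Fin S.T) (k : Fin (S.K t)) :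
    N ≤ (S.fillEmptyJ N).J t k := by
  rcases (S.Y t k).eq_empty_or_nonempty with hY | ⟨y, hy⟩
  · simp [ReturnSystem.fillEmptyJ, hY]
  · rw [ReturnSystem.fillEmptyJ_J_of_nonempty ⟨y, hy⟩]
    exact hS.le_J_of_mem hP hy

theorem exists_J_le_of_isPeriodicPt (hS : IsReturnSystem h P S) {m : ℕ} (hm : 0 < m) {x : X}
    (hx : IsPeriodicPt h m x) : ∃ t k, S.J t k ≤ m := by
  obtain ⟨⟨t, k, j⟩, ⟨-, y, hy, rfl⟩, -⟩ := hS.tower x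
  have hy_per : IsPeriodicPt h m y :=
    (h.injective.iterate j).eq_iff.1 (by rw [← iterate_add_apply, add_comm, iterate_add_apply, hx])
  refine ⟨t, k, ?_⟩
  have := firstReturnTime_le h hm (hy_per.eq.symm ▸ hS.mem_base hy)
  rwa [hS.returnTime t k y hy, Nat.cast_le] at this

end IsReturnSystem

/-- Theorem (Statement 7): a zero-dimensional system admitting systems of finite first
return time maps subordinate to every partition has no periodic points iff for every
partition and every `N` there is a subordinate system all of whose return times are `≥ N`. -/
theorem no_periodic_points_iff_return_times_ge
    {X : Type*} [TopologicalSpace X] [CompactSpace X]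
    [TopologicalSpace.MetrizableSpace X] [TotallyDisconnectedSpace X] (h : X ≃ₜ X)
    (hadm : ∀ R : Set (Set X), IsPartition R → ∃ S : ReturnSystem X, IsReturnSystem h R S) :
    (∀ x : X, ∀ n : ℤ, n ≠ 0 → (h.toEquiv ^ n) x ≠ x) ↔
      ∀ P : Set (Set X), IsPartition P → ∀ N : ℕ, 0 < N →
        ∃ S : ReturnSystem X, IsReturnSystem h P S ∧ ∀ t k, N ≤ S.J t k := by
  constructor
  · intro hnp P hP N hN
    have hx : ∀ x, ∀ j, 0 < j → j < N → (⇑h)^[j] x ≠ x := fun x j hj _ hjx =>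
      hnp x j (by omega) ((Equiv.Perm.zpow_apply_eq_self_iff_isPeriodicPt _ _ _).2 hjx)
    obtain ⟨R, hR, hRP, hRN⟩ := exists_isPartition_finer_forall_le_firstReturnTime h hP hx
    obtain ⟨S, hS⟩ := hadm R hR
    exact ⟨S.fillEmptyJ N, (hS.mono hRP).fillEmptyJ hN, hS.le_fillEmptyJ hRN⟩
  · intro hJ x n hn hx
    obtain ⟨S, hS, hSJ⟩ := hJ {univ} isPartition_singleton_univ (n.natAbs + 1) n.natAbs.succ_pos
    obtain ⟨t, k, hle⟩ := hS.exists_J_le_of_isPeriodicPt (Int.natAbs_pos.2 hn)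
      ((Equiv.Perm.zpow_apply_eq_self_iff_isPeriodicPt _ _ _).1 hx)
    exact absurd (hSJ t k) (by omega)
end

section
/- Let (X, h) be a zero-dimensional system such that for every partition R of X there exists a system of finite first return time maps subordinate to R. Let P and P' be partitions of X, and let S = (T, (X_t), (K_t), (Y_{t,k}), (J_{t,k})) be a system of finite first return time maps subordinate to P. Then there is a system S' = (T', (X'_t), (K'_t), (Y'_{t,k}), (J'_{t,k})) of finite first return time maps subordinate to P' such that for each t' ∈ {1, …, T'} there is a t ∈ {1, …, T} with X'_{t'} ⊆ X_t. -/
open Set Topology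

variable {X : Type*}

/-! Take a system `R` subordinate to the partition refining the levels `h^j (Y t k)` of `S`
by the element of `P'` containing the return point `h^(J t k - j) x ∈ S.base t`. Each base of
`R` lies in one level `h^j (Y t k)`, so pushing its whole tower forward by `h^(J t k - j)`
moves the base into `h^(J t k) (Y t k) ⊆ S.base t` and into a single element of `P'`, while a
tower pushed forward by an iterate of `h` is still a tower of first return times. -/

theorem Homeomorph.isOpenMap_iterate [TopologicalSpace X] (h : X ≃ₜ X) (n : ℕ) :
    IsOpenMap (⇑h)^[n] := by
  induction n with
  | zero => exact IsOpenMap.id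
  | succ n ih => exact ih.comp h.isOpenMap

theorem image_iterate_comm {α : Type*} (f : α → α) (a b : ℕ) (s : Set α) :
    f^[a] '' (f^[b] '' s) = f^[b] '' (f^[a] '' s) :=
  (Function.Commute.iterate_iterate_self f a b).set_image s

theorem firstReturnTime_iterate_image [TopologicalSpace X] (h : X ≃ₜ X) (B : Set X) (m : ℕ)
    (x : X) :
    firstReturnTime h ((⇑h)^[m] '' B) ((⇑h)^[m] x) = firstReturnTime h B x := by
  unfold firstReturnTime
  congr 2
  ext n
  rw [mem_ofPred_eq, mem_ofPred_eq, (Function.Commute.iterate_iterate_self h n m).eq,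
    (h.injective.iterate m).mem_set_image]

/-- The complement of a piece of a partition is the union of the other pieces. -/
theorem isClosed_of_mem_isPartition [TopologicalSpace X] {P : Set (Set X)} (hP : IsPartition P)
    {U : Set X} (hU : U ∈ P) : IsClosed U := by
  obtain ⟨-, -, hopen, hdisj, hcover⟩ := hP
  have hcompl : Uᶜ = ⋃₀ (P \ {U}) := by
    ext x
    constructor
    · intro hx
      obtain ⟨V, hV, hxV⟩ := mem_sUnion.mp (hcover ▸ mem_univ x)
      exact ⟨V, ⟨hV, fun hVU => hx (hVU ▸ hxV)⟩, hxV⟩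
    · rintro ⟨V, ⟨hV, hVU⟩, hxV⟩ hxU
      exact disjoint_left.mp (hdisj hV hU hVU) hxV hxU
  exact isOpen_compl_iff.mp (hcompl ▸ isOpen_sUnion fun V hV => hopen V hV.1)

def ReturnSystem.column [TopologicalSpace X] (h : X ≃ₜ X) (S : ReturnSystem X) (t : Fin S.T) :
    Set X :=
  ⋃ (k) (j : ℕ) (_ : j < S.J t k), (⇑h)^[j] '' S.Y t k

def ReturnSystem.shift [TopologicalSpace X] (h : X ≃ₜ X) (S : ReturnSystem X)
    (m : Fin S.T → ℕ) : ReturnSystem X where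
  T := S.T
  base t := (⇑h)^[m t] '' S.base t
  K := S.K
  Y t k := (⇑h)^[m t] '' S.Y t k
  J := S.J

/-- The common refinement of `P₁(S)` with the pull-backs of `P'` along the return maps. -/
def ReturnSystem.refineAtReturn [TopologicalSpace X] (h : X ≃ₜ X) (S : ReturnSystem X)
    (P' : Set (Set X)) : Set (Set X) :=
  {V | ∃ (t : Fin S.T) (k : Fin (S.K t)) (j : ℕ), j < S.J t k ∧
    ∃ U ∈ P', V = (⇑h)^[j] '' S.Y t k ∩ (⇑h)^[S.J t k - j] ⁻¹' U}

namespace ReturnSystem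

variable [TopologicalSpace X] {h : X ≃ₜ X} {S : ReturnSystem X}

theorem mem_column {t : Fin S.T} {x : X} :
    x ∈ S.column h t ↔ ∃ k, ∃ j : ℕ, j < S.J t k ∧ x ∈ (⇑h)^[j] '' S.Y t k := by
  simp [column]

theorem finite_refineAtReturn {P' : Set (Set X)} (hP' : P'.Finite) :
    (S.refineAtReturn h P').Finite := by
  refine (finite_iUnion fun t => finite_iUnion fun k => (finite_Iio (S.J t k)).biUnion
    fun j _ => hP'.image fun U => (⇑h)^[j] '' S.Y t k ∩ (⇑h)^[S.J t k - j] ⁻¹' U).subset ?_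
  rintro V ⟨t, k, j, hj, U, hU, rfl⟩
  simp only [mem_iUnion]
  exact ⟨t, k, j, hj, U, hU, rfl⟩

end ReturnSystem

namespace IsReturnSystem

open ReturnSystem

variable [TopologicalSpace X] {h : X ≃ₜ X} {P : Set (Set X)} {S : ReturnSystem X}

theorem level_unique (hS : IsReturnSystem h P S) {t₁ t₂ : Fin S.T} {k₁ : Fin (S.K t₁)}
    {k₂ : Fin (S.K t₂)} {j₁ j₂ : ℕ} {x : X}
    (hj₁ : j₁ < S.J t₁ k₁) (hx₁ : x ∈ (⇑h)^[j₁] '' S.Y t₁ k₁)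
    (hj₂ : j₂ < S.J t₂ k₂) (hx₂ : x ∈ (⇑h)^[j₂] '' S.Y t₂ k₂) :
    (⟨t₁, k₁, j₁⟩ : Σ t : Fin S.T, Fin (S.K t) × ℕ) = ⟨t₂, k₂, j₂⟩ :=
  (hS.tower x).unique ⟨hj₁, hx₁⟩ ⟨hj₂, hx₂⟩

theorem level_unique_of_column (hS : IsReturnSystem h P S) {t : Fin S.T} {k₁ k₂ : Fin (S.K t)}
    {j₁ j₂ : ℕ} {x : X}
    (hj₁ : j₁ < S.J t k₁) (hx₁ : x ∈ (⇑h)^[j₁] '' S.Y t k₁)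
    (hj₂ : j₂ < S.J t k₂) (hx₂ : x ∈ (⇑h)^[j₂] '' S.Y t k₂) : k₁ = k₂ ∧ j₁ = j₂ := by
  simpa using hS.level_unique hj₁ hx₁ hj₂ hx₂

theorem exists_mem_column (hS : IsReturnSystem h P S) (x : X) : ∃ t, x ∈ S.column h t := by
  obtain ⟨⟨t, k, j⟩, ⟨hj, hx⟩, -⟩ := hS.tower x
  exact ⟨t, mem_column.mpr ⟨k, j, hj, hx⟩⟩

theorem column_unique (hS : IsReturnSystem h P S) {t₁ t₂ : Fin S.T} {x : X}
    (hx₁ : x ∈ S.column h t₁) (hx₂ : x ∈ S.column h t₂) : t₁ = t₂ := by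
  obtain ⟨k₁, j₁, hj₁, hm₁⟩ := mem_column.mp hx₁
  obtain ⟨k₂, j₂, hj₂, hm₂⟩ := mem_column.mp hx₂
  exact congrArg Sigma.fst (hS.level_unique hj₁ hm₁ hj₂ hm₂)

theorem iterate_image_Y_subset_base (hS : IsReturnSystem h P S) (t : Fin S.T)
    (k : Fin (S.K t)) : (⇑h)^[S.J t k] '' S.Y t k ⊆ S.base t :=
  hS.image_iUnion t ▸ subset_iUnion (fun k => (⇑h)^[S.J t k] '' S.Y t k) k

theorem image_column_subset (hS : IsReturnSystem h P S) (t : Fin S.T) :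
    ⇑h '' S.column h t ⊆ S.column h t := by
  rintro _ ⟨_, hx, rfl⟩
  obtain ⟨k, j, hj, y, hy, rfl⟩ := mem_column.mp hx
  rw [← Function.iterate_succ_apply' h j y]
  rcases (Nat.succ_le_of_lt hj).lt_or_eq with hlt | hJ
  · exact mem_column.mpr ⟨k, j + 1, hlt, y, hy, rfl⟩
  · have hbase : (⇑h)^[j + 1] y ∈ ⋃ k, S.Y t k :=
      hS.Y_iUnion t ▸ hS.iterate_image_Y_subset_base t k ⟨y, hy, by rw [← hJ]⟩
    obtain ⟨k', hk'⟩ := mem_iUnion.mp hbase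
    exact mem_column.mpr ⟨k', 0, hS.J_pos t k', by simpa using hk'⟩

/-- Columns are forward invariant and partition `X`, so each is invariant. -/
theorem image_column (hS : IsReturnSystem h P S) (t : Fin S.T) :
    ⇑h '' S.column h t = S.column h t := by
  refine (hS.image_column_subset t).antisymm fun x hx => ?_
  obtain ⟨y, rfl⟩ := h.surjective x
  obtain ⟨s, hs⟩ := hS.exists_mem_column y
  obtain rfl := hS.column_unique (hS.image_column_subset s ⟨y, hs, rfl⟩) hx
  exact ⟨y, hs, rfl⟩

theorem iterate_image_column (hS : IsReturnSystem h P S) (t : Fin S.T) (m : ℕ) :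
    (⇑h)^[m] '' S.column h t = S.column h t := by
  induction m with
  | zero => simp
  | succ n ih => rw [Function.iterate_succ', image_comp, ih, hS.image_column]

theorem shift_tower (hS : IsReturnSystem h P S) (m : Fin S.T → ℕ) (x : X) :
    ∃! p : Σ t : Fin S.T, Fin (S.K t) × ℕ,
      p.2.2 < S.J p.1 p.2.1 ∧ x ∈ (⇑h)^[p.2.2] '' ((⇑h)^[m p.1] '' S.Y p.1 p.2.1) := by
  simp only [image_iterate_comm h _ (m _)]
  obtain ⟨t, hxt⟩ := hS.exists_mem_column x
  obtain ⟨y, hy, rfl⟩ := (hS.iterate_image_column t (m t)).symm ▸ hxt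
  obtain ⟨k, j, hj, hyk⟩ := mem_column.mp hy
  refine ⟨⟨t, k, j⟩, ⟨hj, mem_image_of_mem _ hyk⟩, ?_⟩
  rintro ⟨t', k', j'⟩ ⟨hj', z, hz, hzy⟩
  have hzt' : (⇑h)^[m t'] z ∈ S.column h t' :=
    hS.iterate_image_column t' (m t') ▸ mem_image_of_mem _ (mem_column.mpr ⟨k', j', hj', hz⟩)
  obtain rfl := hS.column_unique (hzy ▸ hzt') hxt
  obtain rfl := h.injective.iterate (m t') hzy
  obtain ⟨rfl, rfl⟩ := hS.level_unique_of_column hj' hz hj hyk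
  rfl

theorem shift (hS : IsReturnSystem h P S) {P' : Set (Set X)} (m : Fin S.T → ℕ)
    (hsub : ∀ t, ∃ U ∈ P', (⇑h)^[m t] '' S.base t ⊆ U) :
    IsReturnSystem h P' (S.shift h m) where
  T_pos := hS.T_pos
  base_isCompact t := (hS.base_isCompact t).image (h.continuous.iterate _)
  base_isOpen t := h.isOpenMap_iterate _ _ (hS.base_isOpen t)
  base_subset := hsub
  K_pos := hS.K_pos
  Y_isCompact t k := (hS.Y_isCompact t k).image (h.continuous.iterate _)
  Y_isOpen t k := h.isOpenMap_iterate _ _ (hS.Y_isOpen t k)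
  Y_disjoint t k k' hkk :=
    (disjoint_image_iff (h.injective.iterate _)).mpr (hS.Y_disjoint t k k' hkk)
  Y_iUnion t := Set.image_iUnion.symm.trans (congrArg _ (hS.Y_iUnion t))
  J_pos := hS.J_pos
  returnTime t k := by
    rintro _ ⟨y, hy, rfl⟩
    exact (firstReturnTime_iterate_image h _ _ y).trans (hS.returnTime t k y hy)
  image_disjoint t k k' hkk := by
    show Disjoint ((⇑h)^[S.J t k] '' ((⇑h)^[m t] '' S.Y t k))
      ((⇑h)^[S.J t k'] '' ((⇑h)^[m t] '' S.Y t k'))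
    rw [image_iterate_comm h (S.J t k), image_iterate_comm h (S.J t k')]
    exact (disjoint_image_iff (h.injective.iterate _)).mpr (hS.image_disjoint t k k' hkk)
  image_iUnion (t : Fin S.T) := by
    show (⋃ k, (⇑h)^[S.J t k] '' ((⇑h)^[m t] '' S.Y t k)) = (⇑h)^[m t] '' S.base t
    simp only [image_iterate_comm h (S.J t _) (m t)]
    rw [← Set.image_iUnion, hS.image_iUnion]
  tower := hS.shift_tower m

theorem isPartition_refineAtReturn (hS : IsReturnSystem h P S) {P' : Set (Set X)}
    (hP' : IsPartition P') : IsPartition (S.refineAtReturn h P') := by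
  obtain ⟨hfin, hcpt, hopen, hdisj, hcover⟩ := hP'
  refine ⟨finite_refineAtReturn hfin, ?_, ?_, ?_, ?_⟩
  · rintro _ ⟨t, k, j, -, U, hU, rfl⟩
    exact ((hS.Y_isCompact t k).image (h.continuous.iterate j)).inter_right
      ((isClosed_of_mem_isPartition ⟨hfin, hcpt, hopen, hdisj, hcover⟩ hU).preimage
        (h.continuous.iterate _))
  · rintro _ ⟨t, k, j, -, U, hU, rfl⟩
    exact (h.isOpenMap_iterate j _ (hS.Y_isOpen t k)).inter
      ((hopen U hU).preimage (h.continuous.iterate _))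
  · rintro _ ⟨t₁, k₁, j₁, hj₁, U₁, hU₁, rfl⟩ _ ⟨t₂, k₂, j₂, hj₂, U₂, hU₂, rfl⟩ hne
    refine disjoint_left.mpr fun x ⟨hx₁, hU₁x⟩ ⟨hx₂, hU₂x⟩ => hne ?_
    obtain rfl : t₁ = t₂ := congrArg Sigma.fst (hS.level_unique hj₁ hx₁ hj₂ hx₂)
    obtain ⟨rfl, rfl⟩ := hS.level_unique_of_column hj₁ hx₁ hj₂ hx₂
    obtain rfl := hdisj.elim hU₁ hU₂ (not_disjoint_iff.mpr ⟨_, hU₁x, hU₂x⟩)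
    rfl
  · refine eq_univ_of_forall fun x => ?_
    obtain ⟨⟨t, k, j⟩, ⟨hj, hx⟩, -⟩ := hS.tower x
    obtain ⟨U, hU, hUx⟩ := mem_sUnion.mp (hcover ▸ mem_univ ((⇑h)^[S.J t k - j] x))
    exact ⟨_, ⟨t, k, j, hj, U, hU, rfl⟩, hx, hUx⟩

end IsReturnSystem

theorem returnSystem_bases_under_old_bases_general
    {X : Type*} [TopologicalSpace X] (h : X ≃ₜ X)
    (hadm : ∀ R : Set (Set X), IsPartition R → ∃ S : ReturnSystem X, IsReturnSystem h R S)
    (P P' : Set (Set X)) (hP' : IsPartition P')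
    (S : ReturnSystem X) (hS : IsReturnSystem h P S) :
    ∃ S' : ReturnSystem X, IsReturnSystem h P' S' ∧
      ∀ t' : Fin S'.T, ∃ t : Fin S.T, S'.base t' ⊆ S.base t := by
  obtain ⟨R, hR⟩ := hadm _ (hS.isPartition_refineAtReturn hP')
  have hlevel : ∀ t' : Fin R.T, ∃ (t : Fin S.T) (k : Fin (S.K t)) (j : ℕ), j < S.J t k ∧
      ∃ U ∈ P', R.base t' ⊆ (⇑h)^[j] '' S.Y t k ∩ (⇑h)^[S.J t k - j] ⁻¹' U := by
    intro t'
    obtain ⟨_, ⟨t, k, j, hj, U, hU, rfl⟩, hsub⟩ := hR.base_subset t'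
    exact ⟨t, k, j, hj, U, hU, hsub⟩
  choose t k j hj U hU hsub using hlevel
  refine ⟨R.shift h fun t' => S.J (t t') (k t') - j t',
    hR.shift _ fun t' => ⟨U t', hU t', image_subset_iff.mpr fun y hy => (hsub t' hy).2⟩,
    fun t' => ⟨t t', ?_⟩⟩
  calc (⇑h)^[S.J (t t') (k t') - j t'] '' R.base t'
      ⊆ (⇑h)^[S.J (t t') (k t') - j t'] '' ((⇑h)^[j t'] '' S.Y (t t') (k t')) :=
        image_mono fun y hy => (hsub t' hy).1
    _ = (⇑h)^[S.J (t t') (k t')] '' S.Y (t t') (k t') := by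
        rw [← image_comp, ← Function.iterate_add, Nat.sub_add_cancel (hj t').le]
    _ ⊆ S.base (t t') := hS.iterate_image_Y_subset_base _ _

/-- Theorem (Statement 10): if `(X, h)` admits systems of finite first return time maps
subordinate to every partition, then given a system `S` subordinate to `P` and another
partition `P'`, there is a system subordinate to `P'` whose bases lie under the bases of
`S`. -/
theorem returnSystem_bases_under_old_bases
    {X : Type*} [TopologicalSpace X] [CompactSpace X]
    [TopologicalSpace.MetrizableSpace X] [TotallyDisconnectedSpace X] (h : X ≃ₜ X)
    (hadm : ∀ R : Set (Set X), IsPartition R → ∃ S : ReturnSystem X, IsReturnSystem h R S)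
    (P P' : Set (Set X)) (hP : IsPartition P) (hP' : IsPartition P')
    (S : ReturnSystem X) (hS : IsReturnSystem h P S) :
    ∃ S' : ReturnSystem X, IsReturnSystem h P' S' ∧
      ∀ t' : Fin S'.T, ∃ t : Fin S.T, S'.base t' ⊆ S.base t :=
  returnSystem_bases_under_old_bases_general h hadm P P' hP' S hS
end
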